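/- arXiv:math/0509547 — 3 statements merged into one kernel-verified Lean document; each statement's English description precedes it below -/
import Mathlib

section
/- Let n⁻, n⁺ ≥ 1, E = ℝ^{n⁻} × ℝ^{n⁺}, and let f : E → E be an analytic diffeomorphism fixing the origin with f(x, y) = (λ⁻ ⊙ x + r⁻(x, y), λ⁺ ⊙ y + r⁺(x, y)) on a product neighborhood U = B⁻ × B⁺ of 0, where r = (r⁻, r⁺) is analytic with r(0) = 0 and Dr(0) = 0, 0 < |λ⁻_k| < 1 for all k, |λ⁺_j| > 1 for all j, and λ⁻ satisfies the multiplicative non-resonance condition. For i ≥ 1 and z = (x, y) whose iterates f^[j](z), 0 ≤ j ≤ i, stay in U, write f^[i](x, y) = ((λ⁻)^i ⊙ x + r_{−,i}(x, y), (λ⁺)^i ⊙ y + r_{+,i}(x, y)). Let x⁻ ∈ B⁻, let δ ∈ (0, 1)^{n⁺} satisfy the multiplicative non-resonance condition, and let C ∈ ℝ^{n⁺} be admissible. Assume that for every sufficiently large n, setting Y₊ = δ^n ⊙ C, there exist points (x_i, y_i) ∈ W⁺(0) ∩ U (for all sufficiently large i) whose iterates up to time i stay in U, such that the second component of f^[i](x_i,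 y_i) equals Y₊, x_i → x⁻ as i → ∞, and the sequence (λ⁻)^{−i} ⊙ r_{−,i}(x_i, y_i) converges as i → ∞ to a limit l₊(Y₊) ∈ ℝ^{n⁻} for which x⁻ + l₊(Y₊) is admissible (all coordinates nonzero). Then every analytic function I : E → ℝ with I ∘ f = I is constant on a neighborhood of 0. -/
/-!
Since `I ∘ f = I` and `I` is continuous, `I = I 0` on the unstable set `W⁺(0)`, in particular at
the points `f^[i] (xᵢ, yᵢ) = (λ⁻ ^ i ⊙ Wᵢ, Y₊)`, where `Wᵢ = xᵢ + (λ⁻)^{-i} ⊙ r₋ᵢ(xᵢ, yᵢ)` tends to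
the admissible vector `x⁻ + l₊(Y₊)`. Expand `I - I 0 = ∑ A_{ν,μ} x^ν y^μ` near `0` and put
`B_ν(y) = ∑_μ A_{ν,μ} y^μ`, so that `∑_ν B_ν(Y₊) (λ^ν)^i Wᵢ^ν = 0` for all large `i`. By
non-resonance the rates `|λ^ν|` are pairwise distinct; dividing by the `i`-th power of the largest
rate with `B_ν(Y₊) ≠ 0` and letting `i → ∞` (dominated convergence) would leave
`B_ν(Y₊) W^ν = 0` with `W` admissible. Hence all `B_ν(Y₊)` vanish. The same argument applied to
`B_ν` along `Y₊ = δ ^ n ⊙ C`, `n → ∞`, kills every `A_{ν,μ}`, so `I = I 0` near `0`.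
-/

open Filter Topology
open scoped NNReal ENNReal

section MultiPow

variable {κ : Type*} [Fintype κ]

def multiPow {R : Type*} [CommMonoid R] (z : κ → R) (α : κ → ℕ) : R := ∏ k, z k ^ α k

section CommMonoid

variable {R : Type*} [CommMonoid R]

lemma multiPow_mul (z w : κ → R) (α : κ → ℕ) :
    multiPow (z * w) α = multiPow z α * multiPow w α := by
  simp only [multiPow, Pi.mul_apply, mul_pow, Finset.prod_mul_distrib]

lemma multiPow_pow (z : κ → R) (i : ℕ) (α : κ → ℕ) :
    multiPow (z ^ i) α = multiPow z α ^ i := by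
  simp only [multiPow, Pi.pow_apply, ← Finset.prod_pow]
  exact Finset.prod_congr rfl fun k _ => pow_right_comm _ _ _

lemma multiPow_pow_mul (z w : κ → R) (i : ℕ) (α : κ → ℕ) :
    multiPow (z ^ i * w) α = multiPow z α ^ i * multiPow w α := by
  rw [multiPow_mul, multiPow_pow]

lemma multiPow_const (a : R) (α : κ → ℕ) : multiPow (fun _ => a) α = a ^ ∑ k, α k :=
  Finset.prod_pow_eq_pow_sum _ _ _

lemma multiPow_sumElim {κ' : Type*} [Fintype κ'] (x : κ → R) (w : κ' → R) (ν : κ → ℕ)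
    (μ : κ' → ℕ) : multiPow (Sum.elim x w) (Sum.elim ν μ) = multiPow x ν * multiPow w μ := by
  simp [multiPow, Fintype.prod_sum_type]

end CommMonoid

lemma multiPow_ne_zero {R : Type*} [CommMonoidWithZero R] [NoZeroDivisors R] [Nontrivial R]
    {z : κ → R} (hz : ∀ k, z k ≠ 0) (α : κ → ℕ) : multiPow z α ≠ 0 :=
  Finset.prod_ne_zero_iff.mpr fun k _ => pow_ne_zero _ (hz k)

lemma continuous_multiPow {R : Type*} [CommMonoid R] [TopologicalSpace R] [ContinuousMul R]
    (α : κ → ℕ) : Continuous fun z : κ → R => multiPow z α := by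
  unfold multiPow
  fun_prop

lemma abs_multiPow (z : κ → ℝ) (α : κ → ℕ) : |multiPow z α| = multiPow (fun k => |z k|) α := by
  simp [multiPow, Finset.abs_prod]

lemma abs_multiPow_le {z : κ → ℝ} {c : ℝ} (hz : ∀ k, |z k| ≤ c) (α : κ → ℕ) :
    |multiPow z α| ≤ c ^ ∑ k, α k := by
  rw [abs_multiPow, multiPow, ← Finset.prod_pow_eq_pow_sum]
  exact Finset.prod_le_prod (fun k _ => by positivity)
    fun k _ => pow_le_pow_left₀ (abs_nonneg _) (hz k) _

lemma abs_multiPow_le_of_norm_le {z : κ → ℝ} {c : ℝ} (hz : ‖z‖ ≤ c) (α : κ → ℕ) :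
    |multiPow z α| ≤ c ^ ∑ k, α k :=
  abs_multiPow_le (fun k => (Real.norm_eq_abs (z k)).symm.trans_le
    ((norm_le_pi_norm z k).trans hz)) α

lemma abs_mul_multiPow_le {z : κ → ℝ} {c : ℝ} (hz : ‖z‖ ≤ c) (a : ℝ) (α : κ → ℕ) :
    |a * multiPow z α| ≤ |a| * c ^ ∑ k, α k := by
  rw [abs_mul]
  exact mul_le_mul_of_nonneg_left (abs_multiPow_le_of_norm_le hz α) (abs_nonneg a)

section Nonresonant

variable {lam : κ → ℝ}

lemma abs_multiPow_injective (hlam : ∀ k, lam k ≠ 0)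
    (hres : ∀ ν : κ → ℤ, ν ≠ 0 → |∏ k, lam k ^ ν k| ≠ 1) :
    Function.Injective fun α => |multiPow lam α| := by
  intro α β h
  by_contra hne
  refine hres (fun k => (α k : ℤ) - β k) (fun h0 => hne (funext fun k => ?_)) ?_
  · simpa [sub_eq_zero] using congrFun h0 k
  · have hβ : |multiPow lam β| ≠ 0 := abs_ne_zero.mpr (multiPow_ne_zero hlam β)
    simp only [zpow_sub₀ (hlam _), zpow_natCast, Finset.prod_div_distrib, abs_div]
    exact (div_eq_one_iff_eq hβ).mpr h

lemma finite_setOf_le_abs_multiPow (hlam : ∀ k, |lam k| < 1) {c : ℝ} (hc : 0 < c) :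
    {α : κ → ℕ | c ≤ |multiPow lam α|}.Finite := by
  classical
  choose D hD using fun k => exists_pow_lt_of_lt_one hc (hlam k)
  refine (Set.Finite.pi fun k => Set.finite_Iio (D k)).subset fun α hα k _ => ?_
  by_contra hk
  have hfactor : |multiPow lam α| ≤ |lam k| ^ α k := by
    rw [abs_multiPow, multiPow, ← Finset.mul_prod_erase _ _ (Finset.mem_univ k)]
    exact mul_le_of_le_one_right (by positivity)
      (Finset.prod_le_one (fun _ _ => by positivity)
        fun j _ => pow_le_one₀ (abs_nonneg _) (hlam j).le)
  have hsmall : |lam k| ^ α k ≤ |lam k| ^ D k :=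
    pow_le_pow_of_le_one (abs_nonneg _) (hlam k).le (not_lt.mp hk)
  exact (hα.trans (hfactor.trans hsmall)).not_gt (hD k)

lemma exists_isMaxOn_abs_multiPow (hlam0 : ∀ k, lam k ≠ 0) (hlam1 : ∀ k, |lam k| < 1)
    {S : Set (κ → ℕ)} (hS : S.Nonempty) :
    ∃ α ∈ S, IsMaxOn (fun α => |multiPow lam α|) S α := by
  obtain ⟨α₀, hα₀⟩ := hS
  have hpos : 0 < |multiPow lam α₀| := abs_pos.mpr (multiPow_ne_zero hlam0 α₀)
  obtain ⟨α, ⟨hαS, hα⟩, hmax⟩ := Set.exists_max_image _ (fun α => |multiPow lam α|)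
    ((finite_setOf_le_abs_multiPow hlam1 hpos).inter_of_right S)
    ⟨α₀, hα₀, le_refl |multiPow lam α₀|⟩
  refine ⟨α, hαS, fun β hβ => ?_⟩
  by_cases h : |multiPow lam α₀| ≤ |multiPow lam β|
  · exact hmax β ⟨hβ, h⟩
  · exact (not_le.mp h).le.trans hα

lemma abs_multiPow_pow_mul_le {W : κ → ℝ} {ρ R : ℝ} {i₀ i : ℕ} (hi : i₀ ≤ i)
    (hW : ∀ k, |lam k| ^ i₀ * |W k| ≤ ρ) {α : κ → ℕ} (hα : |multiPow lam α| ≤ R) :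
    |multiPow (lam ^ i * W) α| ≤ ρ ^ (∑ k, α k) * R ^ (i - i₀) := by
  obtain ⟨j, rfl⟩ := Nat.exists_eq_add_of_le hi
  rw [Nat.add_sub_cancel_left, add_comm, pow_add, mul_assoc, multiPow_pow_mul, abs_mul, abs_pow,
    mul_comm]
  have hmono : |multiPow (lam ^ i₀ * W) α| ≤ ρ ^ ∑ k, α k :=
    abs_multiPow_le (fun k => by simpa [abs_mul] using hW k) α
  exact mul_le_mul hmono (pow_le_pow_left₀ (abs_nonneg _) hα j) (by positivity)
    ((abs_nonneg _).trans hmono)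

lemma exists_eventually_abs_multiPow_orbit_le (hlam1 : ∀ k, |lam k| < 1) {ρ : ℝ} (hρ : 0 < ρ)
    {W : ℕ → κ → ℝ} {X : κ → ℝ} (hW : Tendsto W atTop (𝓝 X)) {R : ℝ} (hR : 0 < R) :
    ∃ K, ∀ᶠ i in atTop, ∀ α, |multiPow lam α| ≤ R →
      |multiPow (lam ^ i * W i) α| ≤ K * ρ ^ (∑ k, α k) * R ^ i := by
  obtain ⟨i₀, hi₀⟩ : ∃ i₀ : ℕ, ∀ k, |lam k| ^ i₀ * (‖X‖ + 1) ≤ ρ := by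
    refine (eventually_all.mpr fun k => ?_).exists (f := atTop)
    have h := (tendsto_pow_atTop_nhds_zero_of_lt_one (abs_nonneg _) (hlam1 k)).mul_const
      (‖X‖ + 1)
    rw [zero_mul] at h
    exact h.eventually (eventually_le_nhds hρ)
  refine ⟨(R ^ i₀)⁻¹, ?_⟩
  filter_upwards [eventually_ge_atTop i₀,
    hW.norm.eventually (eventually_le_nhds (lt_add_one ‖X‖))] with i hi hWi α hα
  have hWk : ∀ k, |lam k| ^ i₀ * |W i k| ≤ ρ := fun k =>
    (mul_le_mul_of_nonneg_left ((norm_le_pi_norm (W i) k).trans hWi) (by positivity)).trans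
      (hi₀ k)
  calc |multiPow (lam ^ i * W i) α| ≤ ρ ^ (∑ k, α k) * R ^ (i - i₀) :=
        abs_multiPow_pow_mul_le hi hWk hα
    _ = (R ^ i₀)⁻¹ * ρ ^ (∑ k, α k) * R ^ i := by
        rw [← pow_sub_mul_pow R hi]
        field_simp

lemma tendsto_mul_multiPow_orbit_div_pow (hlam0 : ∀ k, lam k ≠ 0)
    (hres : ∀ ν : κ → ℤ, ν ≠ 0 → |∏ k, lam k ^ ν k| ≠ 1) [DecidableEq (κ → ℕ)]
    {A : (κ → ℕ) → ℝ} {α₀ : κ → ℕ}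
    (hmax : IsMaxOn (fun α => |multiPow lam α|) (Function.support A) α₀)
    {W : ℕ → κ → ℝ} {X : κ → ℝ} (hW : Tendsto W atTop (𝓝 X)) (α : κ → ℕ) :
    Tendsto (fun i => A α * multiPow (lam ^ i * W i) α / multiPow lam α₀ ^ i) atTop
      (𝓝 ((Pi.single α₀ (A α₀ * multiPow X α₀) : (κ → ℕ) → ℝ) α)) := by
  have hL : multiPow lam α₀ ≠ 0 := multiPow_ne_zero hlam0 α₀
  have hWα : Tendsto (fun i => A α * multiPow (W i) α) atTop (𝓝 (A α * multiPow X α)) :=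
    ((continuous_multiPow α).tendsto X).comp hW |>.const_mul _
  have hU : ∀ i, A α * multiPow (lam ^ i * W i) α / multiPow lam α₀ ^ i =
      A α * multiPow (W i) α * (multiPow lam α / multiPow lam α₀) ^ i := fun i => by
    rw [multiPow_pow_mul, div_pow]
    ring
  simp only [hU]
  rcases eq_or_ne α α₀ with rfl | hne
  · simpa [div_self hL] using hWα
  rw [Pi.single_eq_of_ne hne]
  rcases eq_or_ne (A α) 0 with hAα | hAα
  · simp [hAα]
  -- non-resonance makes the leading rate strictly dominant
  have hq : |multiPow lam α / multiPow lam α₀| < 1 := by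
    rw [abs_div, div_lt_one (abs_pos.mpr hL)]
    exact (hmax hAα).lt_of_ne fun h => hne (abs_multiPow_injective hlam0 hres h)
  simpa using hWα.mul (tendsto_pow_atTop_nhds_zero_of_abs_lt_one hq)

theorem eq_zero_of_hasSum_multiPow_orbit (hlam0 : ∀ k, lam k ≠ 0) (hlam1 : ∀ k, |lam k| < 1)
    (hres : ∀ ν : κ → ℤ, ν ≠ 0 → |∏ k, lam k ^ ν k| ≠ 1)
    {A : (κ → ℕ) → ℝ} {ρ : ℝ} (hρ : 0 < ρ) (hA : Summable fun α => |A α| * ρ ^ ∑ k, α k)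
    {W : ℕ → κ → ℝ} {X : κ → ℝ} (hW : Tendsto W atTop (𝓝 X)) (hX : ∀ k, X k ≠ 0)
    (hzero : ∀ᶠ i in atTop, HasSum (fun α => A α * multiPow (lam ^ i * W i) α) 0) :
    A = 0 := by
  classical
  by_contra hA0
  obtain ⟨α₀, hα₀, hmax⟩ := exists_isMaxOn_abs_multiPow hlam0 hlam1
    (Function.support_nonempty_iff.mpr hA0)
  set L := multiPow lam α₀
  have hL : L ≠ 0 := multiPow_ne_zero hlam0 α₀
  set U : ℕ → (κ → ℕ) → ℝ := fun i α => A α * multiPow (lam ^ i * W i) α / L ^ i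
  have hlim := tendsto_mul_multiPow_orbit_div_pow hlam0 hres hmax hW
  obtain ⟨K, hK⟩ := exists_eventually_abs_multiPow_orbit_le hlam1 hρ hW (abs_pos.mpr hL)
  have hdom : ∀ᶠ i in atTop, ∀ α, ‖U i α‖ ≤ K * (|A α| * ρ ^ ∑ k, α k) := by
    filter_upwards [hK] with i hi α
    rcases eq_or_ne (A α) 0 with hAα | hAα
    · simp [U, hAα]
    calc ‖U i α‖ = |A α| * |multiPow (lam ^ i * W i) α| / |L| ^ i := by simp [U]
      _ ≤ |A α| * (K * ρ ^ (∑ k, α k) * |L| ^ i) / |L| ^ i := by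
          gcongr
          exact hi α (hmax hAα)
      _ = K * (|A α| * ρ ^ ∑ k, α k) := by
          field_simp
  have hlimU := tendsto_tsum_of_dominated_convergence (hA.mul_left K) hlim hdom
  rw [tsum_pi_single] at hlimU
  have hzeroU : ∀ᶠ i in atTop, ∑' α, U i α = 0 := by
    filter_upwards [hzero] with i hi
    simpa using (hi.div_const (L ^ i)).tsum_eq
  have hleading := tendsto_nhds_unique hlimU (tendsto_const_nhds.congr' (hzeroU.mono
    fun i hi => hi.symm))
  exact mul_ne_zero hα₀ (multiPow_ne_zero hX α₀) hleading

end Nonresonant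

lemma summable_abs_tsum_fiber {β γ : Type*} {f : β → ℝ} (hf : Summable fun b => |f b|)
    (g : β → γ) : Summable fun c => |∑' b : g ⁻¹' {c}, f b| :=
  (hf.hasSum.tsum_fiberwise g).summable.of_nonneg_of_le (fun _ => abs_nonneg _) fun c => by
    simpa only [Real.norm_eq_abs] using
      norm_tsum_le_tsum_norm (f := fun b : g ⁻¹' {c} => f b) (hf.subtype _)

lemma tsum_fiber_mul_apply {β γ : Type*} (g : β → γ) (f : β → ℝ) (h : γ → ℝ) (c : γ) :
    ∑' b : g ⁻¹' {c}, f b * h (g b) = (∑' b : g ⁻¹' {c}, f b) * h c := by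
  rw [← tsum_mul_right]
  exact tsum_congr fun b => by rw [Set.mem_singleton_iff.mp b.2]

lemma FormalMultilinearSeries.exists_summable_norm_mul_pow_sigma
    (p : FormalMultilinearSeries ℝ (κ → ℝ) ℝ) {R : ℝ≥0∞} (hR : 0 < R) (hRp : R ≤ p.radius) :
    ∃ ρ : ℝ≥0, 0 < ρ ∧ (ρ : ℝ≥0∞) < R ∧
      Summable fun b : Σ d : ℕ, Fin d → κ => ‖p b.1‖ * (ρ : ℝ) ^ b.1 := by
  obtain ⟨r, hr, hrR⟩ := ENNReal.lt_iff_exists_nnreal_btwn.mp hR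
  set n : ℕ := Fintype.card κ
  set ρ : ℝ≥0 := r / (n + 1)
  -- `n * ρ` stays below the radius, as the `n ^ d` words of length `d` require
  refine ⟨ρ, div_pos (by exact_mod_cast hr) (by positivity),
    lt_of_le_of_lt (by exact_mod_cast div_le_self zero_le (le_add_of_nonneg_left n.cast_nonneg))
      hrR, ?_⟩
  have hnρ : n * ρ ≤ r := by
    rw [← mul_div_assoc, div_le_iff₀ (by positivity), mul_comm]
    exact mul_le_mul_of_nonneg_left (le_add_of_nonneg_right zero_le_one) zero_le
  refine (summable_sigma_of_nonneg fun b => by positivity).mpr ⟨fun d => .of_finite, ?_⟩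
  refine (p.summable_norm_mul_pow (lt_of_le_of_lt (by exact_mod_cast hnρ) (hrR.trans_le hRp))).congr
    fun d => ?_
  change _ = ∑' _ : Fin d → κ, ‖p d‖ * (ρ : ℝ) ^ d
  rw [tsum_fintype, Finset.sum_const, Finset.card_univ, Fintype.card_fun, Fintype.card_fin,
    nsmul_eq_mul]
  push_cast
  ring

section Expansion

variable [DecidableEq κ]

def letterCount {d : ℕ} (φ : Fin d → κ) (k : κ) : ℕ := (Finset.univ.filter fun i => φ i = k).card

lemma sum_letterCount {d : ℕ} (φ : Fin d → κ) : ∑ k, letterCount φ k = d := by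
  simpa [letterCount] using (Finset.card_eq_sum_card_fiberwise
    (f := φ) (s := Finset.univ) (t := Finset.univ) fun i _ => Finset.mem_univ _).symm

lemma prod_comp_eq_multiPow {R : Type*} [CommMonoid R] {d : ℕ} (z : κ → R) (φ : Fin d → κ) :
    ∏ i, z (φ i) = multiPow z (letterCount φ) := by
  simp only [multiPow, letterCount, ← Fintype.prod_fiberwise' φ z, Finset.prod_const,
    Finset.card_univ, Fintype.card_subtype]

lemma ContinuousMultilinearMap.apply_const_eq_sum_multiPow {d : ℕ} {G : Type*}
    [NormedAddCommGroup G] [NormedSpace ℝ G]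
    (q : ContinuousMultilinearMap ℝ (fun _ : Fin d => κ → ℝ) G) (z : κ → ℝ) :
    (q fun _ => z) =
      ∑ φ : Fin d → κ, multiPow z (letterCount φ) • q fun i => Pi.single (φ i) 1 := by
  have hz : z = ∑ k, z k • Pi.single k (1 : ℝ) := by
    ext k
    simp [Finset.sum_apply, Pi.single_apply]
  conv_lhs => rw [hz, q.map_sum]
  refine Finset.sum_congr rfl fun φ _ => ?_
  rw [q.map_smul_univ, prod_comp_eq_multiPow]

def FormalMultilinearSeries.wordCoeff (p : FormalMultilinearSeries ℝ (κ → ℝ) ℝ)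
    (b : Σ d : ℕ, Fin d → κ) : ℝ :=
  p b.1 fun i => Pi.single (b.2 i) 1

lemma FormalMultilinearSeries.abs_wordCoeff_le (p : FormalMultilinearSeries ℝ (κ → ℝ) ℝ)
    (b : Σ d : ℕ, Fin d → κ) : |p.wordCoeff b| ≤ ‖p b.1‖ := by
  simpa [← Real.norm_eq_abs, wordCoeff, Pi.norm_single] using
    (p b.1).le_opNorm fun i => Pi.single (b.2 i) (1 : ℝ)

lemma FormalMultilinearSeries.abs_wordCoeff_mul_multiPow_le
    (p : FormalMultilinearSeries ℝ (κ → ℝ) ℝ) {z : κ → ℝ} {ρ : ℝ} (hz : ‖z‖ ≤ ρ)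
    (b : Σ d : ℕ, Fin d → κ) :
    |p.wordCoeff b * multiPow z (letterCount b.2)| ≤ ‖p b.1‖ * ρ ^ b.1 := by
  have h := abs_mul_multiPow_le hz (p.wordCoeff b) (letterCount b.2)
  rw [sum_letterCount] at h
  exact h.trans (mul_le_mul_of_nonneg_right (p.abs_wordCoeff_le b)
    (pow_nonneg ((norm_nonneg z).trans hz) _))

lemma HasFPowerSeriesOnBall.hasSum_wordCoeff_mul_multiPow {F : (κ → ℝ) → ℝ}
    {p : FormalMultilinearSeries ℝ (κ → ℝ) ℝ} {R : ℝ≥0∞} (hp : HasFPowerSeriesOnBall F p 0 R)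
    {ρ : ℝ≥0} (hρR : (ρ : ℝ≥0∞) < R)
    (hdom : Summable fun b : Σ d : ℕ, Fin d → κ => ‖p b.1‖ * (ρ : ℝ) ^ b.1)
    {z : κ → ℝ} (hz : ‖z‖ ≤ ρ) :
    HasSum (fun b : Σ d : ℕ, Fin d → κ => p.wordCoeff b * multiPow z (letterCount b.2)) (F z) := by
  have hzR : z ∈ Metric.eball (0 : κ → ℝ) R :=
    mem_eball_zero_iff.mpr (lt_of_le_of_lt (ENNReal.coe_le_coe.mpr (NNReal.coe_le_coe.mp hz)) hρR)
  refine HasSum.sigma_of_hasSum (by simpa using hp.hasSum hzR) (fun d => ?_)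
    (hdom.of_norm_bounded (p.abs_wordCoeff_mul_multiPow_le hz))
  simpa [(p d).apply_const_eq_sum_multiPow z, FormalMultilinearSeries.wordCoeff, mul_comm] using
    hasSum_fintype _

end Expansion

theorem exists_hasSum_multiPow_of_analyticAt {F : (κ → ℝ) → ℝ} (hF : AnalyticAt ℝ F 0) :
    ∃ (A : (κ → ℕ) → ℝ) (ρ : ℝ), 0 < ρ ∧ Summable (fun α => |A α| * ρ ^ ∑ k, α k) ∧
      ∀ z, ‖z‖ ≤ ρ → HasSum (fun α => A α * multiPow z α) (F z) := by
  classical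
  obtain ⟨p, R, hp⟩ := hF
  obtain ⟨ρ, hρ, hρR, hdom⟩ := p.exists_summable_norm_mul_pow_sigma (κ := κ) hp.r_pos hp.r_le
  -- the words `b` with exponent `α` contribute to the coefficient of `z ^ α`
  let exponent := fun b : Σ d : ℕ, Fin d → κ => letterCount b.2
  refine ⟨fun α => ∑' b : exponent ⁻¹' {α}, p.wordCoeff b, ρ, hρ, ?_, fun z hz =>
    ((hp.hasSum_wordCoeff_mul_multiPow hρR hdom hz).tsum_fiberwise exponent).congr_fun fun α =>
      (tsum_fiber_mul_apply exponent _ (multiPow z) α).symm⟩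
  have hρz : ‖fun _ : κ => (ρ : ℝ)‖ ≤ ρ :=
    (pi_norm_le_iff_of_nonneg ρ.coe_nonneg).mpr fun _ => by simp
  refine (summable_abs_tsum_fiber (Summable.of_nonneg_of_le (fun _ => abs_nonneg _)
    (p.abs_wordCoeff_mul_multiPow_le hρz) hdom) exponent).congr fun α => ?_
  have h := tsum_fiber_mul_apply exponent p.wordCoeff (multiPow fun _ => (ρ : ℝ)) α
  rw [multiPow_const] at h
  exact (congrArg abs h).trans (by rw [abs_mul, abs_of_nonneg (pow_nonneg ρ.coe_nonneg _)])

end MultiPow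

theorem exists_hasSum_multiPow_prod_of_analyticAt {κ₁ κ₂ : Type*} [Fintype κ₁] [Fintype κ₂]
    {F : (κ₁ → ℝ) × (κ₂ → ℝ) → ℝ} (hF : AnalyticAt ℝ F 0) :
    ∃ (A : (κ₁ → ℕ) × (κ₂ → ℕ) → ℝ) (ρ : ℝ), 0 < ρ ∧
      Summable (fun p => |A p| * ρ ^ (∑ k, p.1 k + ∑ j, p.2 j)) ∧
      ∀ x w, ‖x‖ ≤ ρ → ‖w‖ ≤ ρ →
        HasSum (fun p => A p * (multiPow x p.1 * multiPow w p.2)) (F (x, w)) := by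
  let L := (LinearEquiv.sumArrowLequivProdArrow κ₁ κ₂ ℝ ℝ).toContinuousLinearEquiv
  obtain ⟨A, ρ, hρ, hA, hexp⟩ :=
    exists_hasSum_multiPow_of_analyticAt (hF.comp_of_eq (L.analyticAt 0) (map_zero L))
  let e := Equiv.sumArrowEquivProdArrow κ₁ κ₂ ℕ
  refine ⟨A ∘ e.symm, ρ, hρ, ?_, fun x w hx hw => ?_⟩
  · refine (e.symm.summable_iff.mpr hA).congr fun ⟨ν, μ⟩ => ?_
    change |A (Sum.elim ν μ)| * ρ ^ ∑ s, Sum.elim ν μ s = _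
    rw [Fintype.sum_sum_type]
    rfl
  · have hxw : ‖(Sum.elim x w : κ₁ ⊕ κ₂ → ℝ)‖ ≤ ρ := by
      refine (pi_norm_le_iff_of_nonneg hρ.le).mpr ?_
      rintro (k | j)
      · exact (norm_le_pi_norm x k).trans hx
      · exact (norm_le_pi_norm w j).trans hw
    exact (e.symm.hasSum_iff.mpr (hexp _ hxw)).congr_fun fun ⟨ν, μ⟩ =>
      congrArg (A (Sum.elim ν μ) * ·) (multiPow_sumElim x w ν μ).symm

lemma tendsto_pow_mul_nhds_zero {κ : Type*} {lam : κ → ℝ} (hlam1 : ∀ k, |lam k| < 1)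
    {W : ℕ → κ → ℝ} {X : κ → ℝ} (hW : Tendsto W atTop (𝓝 X)) :
    Tendsto (fun i => lam ^ i * W i) atTop (𝓝 0) := by
  have hpow : Tendsto (fun i : ℕ => lam ^ i) atTop (𝓝 0) := tendsto_pi_nhds.mpr fun k => by
    simpa using tendsto_pow_atTop_nhds_zero_of_abs_lt_one (hlam1 k)
  simpa using hpow.mul hW

section Slices

variable {κ₁ κ₂ : Type*} [Fintype κ₁] [Fintype κ₂] {A : (κ₁ → ℕ) × (κ₂ → ℕ) → ℝ} {ρ : ℝ}

lemma summable_abs_mul_pow_slice (hρ : 0 < ρ)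
    (hA : Summable fun p => |A p| * ρ ^ (∑ k, p.1 k + ∑ j, p.2 j)) (ν : κ₁ → ℕ) :
    Summable fun μ => |A (ν, μ)| * ρ ^ ∑ j, μ j :=
  (summable_mul_left_iff (pow_ne_zero (∑ k, ν k) hρ.ne')).mp <|
    (hA.prod_factor ν).congr fun μ => by rw [pow_add]; ring

lemma summable_slice {w : κ₂ → ℝ} (hρ : 0 < ρ)
    (hA : Summable fun p => |A p| * ρ ^ (∑ k, p.1 k + ∑ j, p.2 j)) (hw : ‖w‖ ≤ ρ)
    (ν : κ₁ → ℕ) : Summable fun μ => A (ν, μ) * multiPow w μ :=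
  (summable_abs_mul_pow_slice hρ hA ν).of_norm_bounded fun μ => abs_mul_multiPow_le hw _ μ

lemma summable_abs_tsum_slice_mul_pow {w : κ₂ → ℝ} (hρ : 0 < ρ)
    (hA : Summable fun p => |A p| * ρ ^ (∑ k, p.1 k + ∑ j, p.2 j)) (hw : ‖w‖ ≤ ρ) :
    Summable fun ν => |∑' μ, A (ν, μ) * multiPow w μ| * ρ ^ ∑ k, ν k := by
  refine hA.prod.of_nonneg_of_le (fun ν => by positivity) fun ν => ?_
  calc |∑' μ, A (ν, μ) * multiPow w μ| * ρ ^ ∑ k, ν k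
      ≤ (∑' μ, |A (ν, μ)| * ρ ^ ∑ j, μ j) * ρ ^ ∑ k, ν k := by
        gcongr
        exact tsum_of_norm_bounded (f := fun μ => A (ν, μ) * multiPow w μ)
          (summable_abs_mul_pow_slice hρ hA ν).hasSum fun μ => abs_mul_multiPow_le hw _ μ
    _ = ∑' μ, |A (ν, μ)| * ρ ^ (∑ k, ν k + ∑ j, μ j) := by
        rw [← tsum_mul_right]
        exact tsum_congr fun μ => by rw [pow_add]; ring

theorem hasSum_slice_eq_zero_of_eventually_eq_zero {lam : κ₁ → ℝ} (hlam0 : ∀ k, lam k ≠ 0)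
    (hlam1 : ∀ k, |lam k| < 1) (hres : ∀ ν : κ₁ → ℤ, ν ≠ 0 → |∏ k, lam k ^ ν k| ≠ 1)
    (hρ : 0 < ρ) (hA : Summable fun p => |A p| * ρ ^ (∑ k, p.1 k + ∑ j, p.2 j))
    {F : (κ₁ → ℝ) × (κ₂ → ℝ) → ℝ} (hF : ∀ x w, ‖x‖ ≤ ρ → ‖w‖ ≤ ρ →
      HasSum (fun p => A p * (multiPow x p.1 * multiPow w p.2)) (F (x, w)))
    {w : κ₂ → ℝ} (hw : ‖w‖ ≤ ρ) {W : ℕ → κ₁ → ℝ} {X : κ₁ → ℝ} (hW : Tendsto W atTop (𝓝 X))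
    (hX : ∀ k, X k ≠ 0) (hzero : ∀ᶠ i in atTop, F (lam ^ i * W i, w) = 0) (ν : κ₁ → ℕ) :
    HasSum (fun μ => A (ν, μ) * multiPow w μ) 0 := by
  have horbit := tendsto_pow_mul_nhds_zero hlam1 hW
  have hcurry : ∀ᶠ i in atTop, HasSum
      (fun ν => (∑' μ, A (ν, μ) * multiPow w μ) * multiPow (lam ^ i * W i) ν) 0 := by
    filter_upwards [hzero, horbit.norm.eventually (eventually_le_nhds (by simpa using hρ))]
      with i hi hsmall
    rw [← hi]
    refine (hF _ _ hsmall hw).prod_fiberwise fun ν => ?_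
    exact ((summable_slice hρ hA hw ν).hasSum.mul_right _).congr_fun fun μ => by ring
  have hslice := eq_zero_of_hasSum_multiPow_orbit hlam0 hlam1 hres hρ
    (summable_abs_tsum_slice_mul_pow hρ hA hw) hW hX hcurry
  simpa [congrFun hslice ν] using (summable_slice hρ hA hw ν).hasSum

end Slices

theorem apply_iterate_eq_of_tendsto_iterate_inv {X Y : Type*} [TopologicalSpace X]
    [TopologicalSpace Y] [T2Space Y] {f g : X → X} (hfg : Function.RightInverse g f) {I : X → Y}
    (hIf : I ∘ f = I) {u p : X} (hI : ContinuousAt I p)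
    (hu : Tendsto (fun m => g^[m] u) atTop (𝓝 p)) (i : ℕ) : I (f^[i] u) = I p := by
  have hIg : I ∘ g = I := funext fun v => by simpa [hfg v] using (congrFun hIf (g v)).symm
  rw [← Function.comp_apply (f := I), Function.iterate_invariant hIf]
  exact tendsto_nhds_unique
    (tendsto_const_nhds.congr fun m => (congrFun (Function.iterate_invariant hIg m) u).symm)
    (hI.tendsto.comp hu)

lemma pow_mul_add_zpow_neg_mul_sub {K : Type*} [Field K] {c : K} (hc : c ≠ 0) (i : ℕ) (x v : K) :
    c ^ i * (x + c ^ (-(i : ℤ)) * (v - c ^ i * x)) = v := by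
  rw [zpow_neg, zpow_natCast]
  field_simp
  ring

theorem analytic_nonintegrability_remainder_condition_general
    (nm np : ℕ)
    (f g : (Fin nm → ℝ) × (Fin np → ℝ) → (Fin nm → ℝ) × (Fin np → ℝ))
    (hfg : Function.RightInverse g f)
    (lm : Fin nm → ℝ)
    (hlm : ∀ k, 0 < |lm k| ∧ |lm k| < 1)
    (hres : ∀ ν : Fin nm → ℤ, ν ≠ 0 → |∏ k, lm k ^ ν k| ≠ 1)
    (a b : ℝ)
    -- data: `x⁻ ∈ B⁻`, non-resonant `δ ∈ (0,1)^{n⁺}`, admissible `C`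
    (xm : Fin nm → ℝ)
    (δ : Fin np → ℝ) (hδ : ∀ j, 0 < δ j ∧ δ j < 1)
    (hδres : ∀ ν : Fin np → ℤ, ν ≠ 0 → |∏ j, δ j ^ ν j| ≠ 1)
    (C : Fin np → ℝ) (hC : ∀ j, C j ≠ 0)
    -- the remainder condition along the planes `P_{C₊}` with `Y₊ = δ^n ⊙ C`
    (hmain : ∀ᶠ n in (atTop : Filter ℕ),
      ∃ (x : ℕ → Fin nm → ℝ) (y : ℕ → Fin np → ℝ) (l : Fin nm → ℝ),
        (∀ᶠ i in (atTop : Filter ℕ),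
          Tendsto (fun m => g^[m] (x i, y i)) atTop
            (𝓝 (0 : (Fin nm → ℝ) × (Fin np → ℝ))) ∧
          (∀ j ≤ i, f^[j] (x i, y i) ∈
            Metric.ball (0 : Fin nm → ℝ) a ×ˢ Metric.ball (0 : Fin np → ℝ) b) ∧
          (f^[i] (x i, y i)).2 = fun j => δ j ^ n * C j) ∧
        Tendsto x atTop (𝓝 xm) ∧
        Tendsto (fun i : ℕ => fun k =>
            (lm k : ℝ) ^ (-(i : ℤ)) * ((f^[i] (x i, y i)).1 k - lm k ^ i * x i k))
          atTop (𝓝 l) ∧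
        (∀ k, xm k + l k ≠ 0))
    -- analytic first integral
    (I : (Fin nm → ℝ) × (Fin np → ℝ) → ℝ)
    (hI : AnalyticOnNhd ℝ I Set.univ) (hIf : I ∘ f = I) :
    ∀ᶠ z in 𝓝 (0 : (Fin nm → ℝ) × (Fin np → ℝ)), I z = I 0 := by
  have hδ1 : ∀ j, |δ j| < 1 := fun j => abs_lt.mpr ⟨by linarith [(hδ j).1], (hδ j).2⟩
  obtain ⟨A, ρ, hρ, hA, hexp⟩ := exists_hasSum_multiPow_prod_of_analyticAt
    ((hI 0 trivial).sub analyticAt_const : AnalyticAt ℝ (fun z => I z - I 0) 0)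
  have hslices : ∀ᶠ n in atTop, ∀ ν, HasSum (fun μ => A (ν, μ) * multiPow (δ ^ n * C) μ) 0 := by
    filter_upwards [hmain, (tendsto_pow_mul_nhds_zero hδ1 tendsto_const_nhds).norm.eventually
      (eventually_le_nhds (by simpa using hρ))] with n hn hnρ
    obtain ⟨x, y, l, hev, hx, hrem, hadm⟩ := hn
    refine hasSum_slice_eq_zero_of_eventually_eq_zero (fun k => abs_pos.mp (hlm k).1)
      (fun k => (hlm k).2) hres hρ hA hexp hnρ (hx.add hrem) hadm ?_
    filter_upwards [hev] with i hi
    obtain ⟨hu, -, hy⟩ := hi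
    have hpoint : (lm ^ i * (x i + fun k =>
        lm k ^ (-(i : ℤ)) * ((f^[i] (x i, y i)).1 k - lm k ^ i * x i k)), δ ^ n * C) =
        f^[i] (x i, y i) :=
      Prod.ext (funext fun k => pow_mul_add_zpow_neg_mul_sub (abs_pos.mp (hlm k).1) i _ _)
        hy.symm
    rw [Pi.sub_apply, hpoint, sub_eq_zero]
    exact apply_iterate_eq_of_tendsto_iterate_inv hfg hIf (hI 0 trivial).continuousAt hu i
  have hA0 : A = 0 := funext fun p => congrFun (eq_zero_of_hasSum_multiPow_orbit
    (fun j => (hδ j).1.ne') hδ1 hδres hρ (summable_abs_mul_pow_slice hρ hA p.1)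
    (tendsto_const_nhds (x := C)) hC (hslices.mono fun n hn => hn p.1)) p.2
  filter_upwards [Metric.closedBall_mem_nhds 0 hρ] with z hz
  rw [Metric.mem_closedBall, dist_zero_right] at hz
  have hsum := hexp z.1 z.2 ((norm_fst_le z).trans hz) ((norm_snd_le z).trans hz)
  simp only [hA0, Pi.zero_apply, zero_mul] at hsum
  exact sub_eq_zero.mp (hsum.unique hasSum_zero)

/-- Let `f` be an analytic diffeomorphism of `E = ℝ^{n⁻} × ℝ^{n⁺}` (with
analytic inverse `g`) fixing the origin, with
`f(x,y) = (λ⁻ ⊙ x + r⁻(x,y), λ⁺ ⊙ y + r⁺(x,y))` on `U = B⁻ × B⁺`, where `r = (r⁻, r⁺)` is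
analytic with `r(0) = 0`, `Dr(0) = 0`, `0 < |λ⁻ₖ| < 1`, `|λ⁺ⱼ| > 1`, and `λ⁻` satisfies the
multiplicative non-resonance condition.  For `z` whose iterates up to time `i` stay in `U`
write `f^[i](x,y) = ((λ⁻)^i ⊙ x + r₋ᵢ(x,y), (λ⁺)^i ⊙ y + r₊ᵢ(x,y))`, so
`r₋ᵢ(x,y) = (f^[i](x,y)).1 - (λ⁻)^i ⊙ x`.  Let `x⁻ ∈ B⁻`, let `δ ∈ (0,1)^{n⁺}` be
multiplicatively non-resonant, and let `C` be admissible.  Assume that for every sufficiently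
large `n`, with `Y₊ = δ^n ⊙ C`, there are points `(xᵢ, yᵢ) ∈ W⁺(0) ∩ U` (for all large `i`)
whose iterates up to time `i` stay in `U`, with `(f^[i](xᵢ,yᵢ)).2 = Y₊`, `xᵢ → x⁻`, and
`(λ⁻)^{-i} ⊙ r₋ᵢ(xᵢ,yᵢ) → l₊(Y₊)` with `x⁻ + l₊(Y₊)` admissible.  Then every analytic first
integral `I` of `f` is constant on a neighbourhood of `0`. -/
theorem analytic_nonintegrability_remainder_condition
    (nm np : ℕ) (hnm : 1 ≤ nm) (hnp : 1 ≤ np)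
    (f g : (Fin nm → ℝ) × (Fin np → ℝ) → (Fin nm → ℝ) × (Fin np → ℝ))
    (hf : AnalyticOnNhd ℝ f Set.univ) (hg : AnalyticOnNhd ℝ g Set.univ)
    (hgf : Function.LeftInverse g f) (hfg : Function.RightInverse g f)
    (hf0 : f 0 = 0)
    (lm : Fin nm → ℝ) (lp : Fin np → ℝ)
    (hlm : ∀ k, 0 < |lm k| ∧ |lm k| < 1) (hlp : ∀ j, 1 < |lp j|)
    (hres : ∀ ν : Fin nm → ℤ, ν ≠ 0 → |∏ k, lm k ^ ν k| ≠ 1)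
    -- form of `f` on `U = B⁻ × B⁺`, with analytic remainder `r`, `r(0) = 0`, `Dr(0) = 0`
    (a b : ℝ) (ha : 0 < a) (hb : 0 < b)
    (r : (Fin nm → ℝ) × (Fin np → ℝ) → (Fin nm → ℝ) × (Fin np → ℝ))
    (hr : AnalyticOnNhd ℝ r
      (Metric.ball (0 : Fin nm → ℝ) a ×ˢ Metric.ball (0 : Fin np → ℝ) b))
    (hr0 : r 0 = 0) (hDr : fderiv ℝ r 0 = 0)
    (hfU : ∀ z : (Fin nm → ℝ) × (Fin np → ℝ),
      z ∈ Metric.ball (0 : Fin nm → ℝ) a ×ˢ Metric.ball (0 : Fin np → ℝ) b →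
      f z = (fun k => lm k * z.1 k + (r z).1 k, fun j => lp j * z.2 j + (r z).2 j))
    -- data: `x⁻ ∈ B⁻`, non-resonant `δ ∈ (0,1)^{n⁺}`, admissible `C`
    (xm : Fin nm → ℝ) (hxm : xm ∈ Metric.ball (0 : Fin nm → ℝ) a)
    (δ : Fin np → ℝ) (hδ : ∀ j, 0 < δ j ∧ δ j < 1)
    (hδres : ∀ ν : Fin np → ℤ, ν ≠ 0 → |∏ j, δ j ^ ν j| ≠ 1)
    (C : Fin np → ℝ) (hC : ∀ j, C j ≠ 0)
    -- the remainder condition along the planes `P_{C₊}` with `Y₊ = δ^n ⊙ C`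
    (hmain : ∀ᶠ n in (atTop : Filter ℕ),
      ∃ (x : ℕ → Fin nm → ℝ) (y : ℕ → Fin np → ℝ) (l : Fin nm → ℝ),
        (∀ᶠ i in (atTop : Filter ℕ),
          Tendsto (fun m => g^[m] (x i, y i)) atTop
            (𝓝 (0 : (Fin nm → ℝ) × (Fin np → ℝ))) ∧
          (∀ j ≤ i, f^[j] (x i, y i) ∈
            Metric.ball (0 : Fin nm → ℝ) a ×ˢ Metric.ball (0 : Fin np → ℝ) b) ∧
          (f^[i] (x i, y i)).2 = fun j => δ j ^ n * C j) ∧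
        Tendsto x atTop (𝓝 xm) ∧
        Tendsto (fun i : ℕ => fun k =>
            (lm k : ℝ) ^ (-(i : ℤ)) * ((f^[i] (x i, y i)).1 k - lm k ^ i * x i k))
          atTop (𝓝 l) ∧
        (∀ k, xm k + l k ≠ 0))
    -- analytic first integral
    (I : (Fin nm → ℝ) × (Fin np → ℝ) → ℝ)
    (hI : AnalyticOnNhd ℝ I Set.univ) (hIf : I ∘ f = I) :
    ∀ᶠ z in 𝓝 (0 : (Fin nm → ℝ) × (Fin np → ℝ)), I z = I 0 :=
  analytic_nonintegrability_remainder_condition_general nm np f g hfg lm hlm hres a b xm δ hδ hδres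
    C hC hmain I hI hIf
end

section
/- Let (r_j)_{j ∈ ℕ} be a strictly decreasing sequence of positive real numbers with r_j → 0, let (b_j)_{j ∈ ℕ} be real numbers and N ∈ ℕ such that the series Σ_j |b_j| r_j^N converges. If Σ_{j ∈ ℕ} b_j r_j^n = 0 for every integer n ≥ N, then b_j = 0 for every j. In particular, if r_0 = 1 and Σ_{j ∈ ℕ} b_j r_j^n = e for every n ≥ N (with e ∈ ℝ a constant), then b_0 = e and b_j = 0 for all j ≥ 1. -/
/-!
Normalise by the `j`-th rate: if `b i = 0` for `i < j`, then
`(∑' i, b i * r i ^ n) / r j ^ n = ∑' i, b i * (r i / r j) ^ n`, and every ratio `r i / r j`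
with `i > j` lies in `[0, 1)`, so by dominated convergence (dominated by the `n = N` series)
the normalised sums tend to `b j`. Vanishing sums therefore kill the coefficients one by one.
For the constant case, the normalisation with `j = 0` and `r 0 = 1` gives `b 0 = e`, after which
the tail series starting at index `1` vanishes identically.
-/

open Filter Topology

section DirichletSeries

variable {r b : ℕ → ℝ} {N : ℕ}

theorem summable_mul_pow_of_summable_abs_mul_pow (hr : Antitone r) (hr_nonneg : ∀ i, 0 ≤ r i)
    (hsum : Summable fun i => |b i| * r i ^ N) {n : ℕ} (hn : N ≤ n) :
    Summable fun i => b i * r i ^ n := by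
  refine (hsum.mul_right (r 0 ^ (n - N))).of_norm_bounded fun i => ?_
  have hri : r i ^ n = r i ^ N * r i ^ (n - N) := by rw [← pow_add, Nat.add_sub_cancel' hn]
  rw [Real.norm_eq_abs, abs_mul, abs_pow, abs_of_nonneg (hr_nonneg i), hri, ← mul_assoc]
  exact mul_le_mul_of_nonneg_left (pow_le_pow_left₀ (hr_nonneg i) (hr (Nat.zero_le i)) _)
    (mul_nonneg (abs_nonneg _) (pow_nonneg (hr_nonneg i) _))

theorem tendsto_tsum_mul_pow_div_pow (hr : StrictAnti r) (hr_nonneg : ∀ i, 0 ≤ r i)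
    (hsum : Summable fun i => |b i| * r i ^ N) {j : ℕ} (hb : ∀ i < j, b i = 0) :
    Tendsto (fun n => (∑' i, b i * r i ^ n) / r j ^ n) atTop (𝓝 (b j)) := by
  have hrj : 0 < r j := (hr_nonneg (j + 1)).trans_lt (hr j.lt_succ_self)
  have hratio_nonneg (i : ℕ) : 0 ≤ r i / r j := div_nonneg (hr_nonneg i) hrj.le
  have hlim (i : ℕ) :
      Tendsto (fun n => b i * (r i / r j) ^ n) atTop
        (𝓝 ((Pi.single j (b j) : ℕ → ℝ) i)) := by
    rcases lt_trichotomy i j with hij | rfl | hij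
    · simp [hb i hij, hij.ne]
    · simp [div_self hrj.ne']
    · have hratio_lt : r i / r j < 1 := (div_lt_one hrj).2 (hr hij)
      simpa [hij.ne'] using
        (tendsto_pow_atTop_nhds_zero_of_lt_one (hratio_nonneg i) hratio_lt).const_mul (b i)
  have hbound :
      ∀ᶠ n in atTop, ∀ i, ‖b i * (r i / r j) ^ n‖ ≤ |b i| * r i ^ N / r j ^ N := by
    filter_upwards [eventually_ge_atTop N] with n hn i
    rw [mul_div_assoc, ← div_pow, norm_mul, Real.norm_eq_abs, norm_pow, Real.norm_eq_abs,
      abs_of_nonneg (hratio_nonneg i)]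
    rcases lt_or_ge i j with hij | hji
    · simp [hb i hij]
    · exact mul_le_mul_of_nonneg_left (pow_le_pow_of_le_one (hratio_nonneg i)
        ((div_le_one hrj).2 (hr.antitone hji)) hn) (abs_nonneg _)
  have hnormalise (n : ℕ) :
      (∑' i, b i * r i ^ n) / r j ^ n = ∑' i, b i * (r i / r j) ^ n := by
    simp_rw [div_pow, ← mul_div_assoc, tsum_div_const]
  simpa only [hnormalise, tsum_pi_single] using
    tendsto_tsum_of_dominated_convergence (hsum.div_const _) hlim hbound

theorem eq_zero_of_forall_tsum_mul_pow_eq_zero (hr : StrictAnti r) (hr_nonneg : ∀ i, 0 ≤ r i)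
    (hsum : Summable fun i => |b i| * r i ^ N)
    (hzero : ∀ n, N ≤ n → ∑' i, b i * r i ^ n = 0) (j : ℕ) : b j = 0 := by
  induction j using Nat.strong_induction_on with
  | _ j ih =>
    refine tendsto_nhds_unique (tendsto_tsum_mul_pow_div_pow hr hr_nonneg hsum ih)
      (tendsto_const_nhds.congr' ?_)
    filter_upwards [eventually_ge_atTop N] with n hn
    rw [hzero n hn, zero_div]

end DirichletSeries

theorem dirichlet_series_vanishing_general
    (r b : ℕ → ℝ) (N : ℕ)
    (hr_anti : StrictAnti r) (hr_pos : ∀ j, 0 < r j)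
    (hsum : Summable fun j => |b j| * r j ^ N) :
    ((∀ n : ℕ, N ≤ n → ∑' j : ℕ, b j * r j ^ n = 0) → ∀ j, b j = 0) ∧
    (∀ e : ℝ, r 0 = 1 → (∀ n : ℕ, N ≤ n → ∑' j : ℕ, b j * r j ^ n = e) →
      b 0 = e ∧ ∀ j : ℕ, 1 ≤ j → b j = 0) := by
  have hr_nonneg (j : ℕ) : 0 ≤ r j := (hr_pos j).le
  refine ⟨eq_zero_of_forall_tsum_mul_pow_eq_zero hr_anti hr_nonneg hsum, fun e hr0 he => ?_⟩
  have hb0 : b 0 = e := by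
    refine tendsto_nhds_unique
      (tendsto_tsum_mul_pow_div_pow hr_anti hr_nonneg hsum (j := 0) (by simp))
      (tendsto_const_nhds.congr' ?_)
    filter_upwards [eventually_ge_atTop N] with n hn
    rw [he n hn, hr0, one_pow, div_one]
  have htail (n : ℕ) (hn : N ≤ n) : ∑' j, b (j + 1) * r (j + 1) ^ n = 0 := by
    have hsplit :=
      (summable_mul_pow_of_summable_abs_mul_pow hr_anti.antitone hr_nonneg hsum hn).tsum_eq_zero_add
    rw [he n hn, hr0, one_pow, mul_one, hb0] at hsplit
    linarith
  refine ⟨hb0, fun j hj => ?_⟩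
  obtain ⟨k, rfl⟩ := Nat.exists_eq_add_of_le' hj
  exact eq_zero_of_forall_tsum_mul_pow_eq_zero (fun _ _ h => hr_anti (Nat.succ_lt_succ h))
    (fun i => hr_nonneg (i + 1)) ((summable_nat_add_iff 1).2 hsum) htail k

/-- vanishing principle for generalized Dirichlet-type series.  Let
`(r_j)` be a strictly decreasing sequence of positive reals with `r_j → 0`, `(b_j)` reals and
`N ∈ ℕ` with `Σ_j |b_j| r_j^N < ∞`.  If `Σ_j b_j r_j^n = 0` for every `n ≥ N` then all
`b_j = 0`.  In particular, if `r_0 = 1` and `Σ_j b_j r_j^n = e` for every `n ≥ N`, then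
`b_0 = e` and `b_j = 0` for all `j ≥ 1`. -/
theorem dirichlet_series_vanishing
    (r b : ℕ → ℝ) (N : ℕ)
    (hr_anti : StrictAnti r) (hr_pos : ∀ j, 0 < r j)
    (hr_lim : Tendsto r atTop (𝓝 0))
    (hsum : Summable fun j => |b j| * r j ^ N) :
    ((∀ n : ℕ, N ≤ n → ∑' j : ℕ, b j * r j ^ n = 0) → ∀ j, b j = 0) ∧
    (∀ e : ℝ, r 0 = 1 → (∀ n : ℕ, N ≤ n → ∑' j : ℕ, b j * r j ^ n = e) →
      b 0 = e ∧ ∀ j : ℕ, 1 ≤ j → b j = 0) :=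
  dirichlet_series_vanishing_general r b N hr_anti hr_pos hsum
end

section
/- Let m ≥ 1, let δ ∈ (0, 1)^m satisfy the multiplicative non-resonance condition, and let C ∈ ℝ^m be admissible (all coordinates nonzero). Let g be an analytic real-valued function on a neighborhood of 0 in ℝ^m with Taylor expansion g(y) = Σ_{w ∈ ℕ^m} a_w y^w at 0, and let e ∈ ℝ be such that g(δ^n ⊙ C) = e for all sufficiently large n ∈ ℕ. Then a_0 = e and a_w = 0 for every w ∈ ℕ^m \ {0}; in particular g is identically equal to e on a neighborhood of 0. -/
open Filter Topology

/-- second step.  Let `δ ∈ (0,1)^m` satisfy the multiplicative non-resonance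
condition and let `C ∈ ℝ^m` be admissible.  Let `g` be analytic near `0 ∈ ℝ^m` with Taylor
expansion `g(y) = Σ_{w ∈ ℕ^m} a_w y^w` (convergent on a polydisc), and `e ∈ ℝ` with
`g(δ^n ⊙ C) = e` for all sufficiently large `n`.  Then `a_0 = e` and `a_w = 0` for all
`w ≠ 0`; in particular `g = e` on a neighbourhood of `0`. -/
theorem second_step_geometric_sequence
    (m : ℕ) (hm : 1 ≤ m)
    (δ : Fin m → ℝ) (hδ : ∀ k, 0 < δ k ∧ δ k < 1)
    (hδres : ∀ ν : Fin m → ℤ, ν ≠ 0 → |∏ k, δ k ^ ν k| ≠ 1)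
    (C : Fin m → ℝ) (hC : ∀ k, C k ≠ 0)
    (g : (Fin m → ℝ) → ℝ) (hg : AnalyticAt ℝ g 0)
    (a : (Fin m → ℕ) → ℝ) (ε : ℝ) (hε : 0 < ε)
    (hga : ∀ y : Fin m → ℝ, (∀ k, |y k| < ε) →
      HasSum (fun w : Fin m → ℕ => a w * ∏ k, y k ^ w k) (g y))
    (e : ℝ)
    (hge : ∀ᶠ n in (atTop : Filter ℕ), g (fun k => δ k ^ n * C k) = e) :
    a 0 = e ∧ (∀ w : Fin m → ℕ, w ≠ 0 → a w = 0) ∧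
    ∀ᶠ y in 𝓝 (0 : Fin m → ℝ), g y = e := by
  classical
  set L : (Fin m → ℕ) → ℝ := fun w => ∏ k, δ k ^ w k with hLdef
  set b : (Fin m → ℕ) → ℝ := fun w => a w * ∏ k, C k ^ w k with hbdef
  have hδpos : ∀ k, 0 < δ k := fun k => (hδ k).1
  have hLpos : ∀ w, 0 < L w := fun w => Finset.prod_pos fun k _ => pow_pos (hδpos k) _
  have hLle1 : ∀ w, L w ≤ 1 := fun w =>
    Finset.prod_le_one (fun k _ => (pow_pos (hδpos k) _).le)
      (fun k _ => pow_le_one₀ (hδpos k).le (hδ k).2.le)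
  have hL0 : L 0 = 1 := by simp [hLdef]
  -- Injectivity of `L` from the non-resonance hypothesis
  have hLinj : Function.Injective L := by
    intro w w' hww
    by_contra hne
    have hν : (fun k => (w k : ℤ) - (w' k : ℤ)) ≠ 0 := by
      intro h
      apply hne; funext k
      have := congrFun h k
      simpa [sub_eq_zero] using this
    apply hδres _ hν
    have hprod : ∏ k, δ k ^ ((w k : ℤ) - (w' k : ℤ)) = L w / L w' := by
      rw [← Finset.prod_div_distrib]
      refine Finset.prod_congr rfl fun k _ => ?_
      rw [zpow_sub₀ (hδpos k).ne', zpow_natCast, zpow_natCast]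
    rw [hprod, hww, div_self (hLpos w').ne', abs_one]
  -- `L w < 1` for `w ≠ 0`
  have hLlt1 : ∀ w, w ≠ 0 → L w < 1 := fun w hw =>
    lt_of_le_of_ne (hLle1 w) fun h => hw (hLinj (h.trans hL0.symm))
  -- Finiteness of superlevel sets of `L`
  have hmne : (Finset.univ : Finset (Fin m)).Nonempty := ⟨⟨0, hm⟩, Finset.mem_univ _⟩
  set D : ℝ := Finset.univ.sup' hmne δ with hDdef
  have hD1 : D < 1 := (Finset.sup'_lt_iff hmne).2 fun k _ => (hδ k).2
  have hD0 : 0 < D := lt_of_lt_of_le (hδpos ⟨0, hm⟩) (Finset.le_sup' δ (Finset.mem_univ _))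
  have hLD : ∀ w : Fin m → ℕ, L w ≤ D ^ (∑ k, w k) := by
    intro w
    rw [← Finset.prod_pow_eq_pow_sum]
    exact Finset.prod_le_prod (fun k _ => (pow_pos (hδpos k) _).le)
      (fun k _ => pow_le_pow_left₀ (hδpos k).le (Finset.le_sup' δ (Finset.mem_univ k)) _)
  have hfin : ∀ t : ℝ, 0 < t → {w : Fin m → ℕ | t ≤ L w}.Finite := by
    intro t ht
    obtain ⟨N, hN⟩ := eventually_atTop.mp
      ((tendsto_pow_atTop_nhds_zero_of_lt_one hD0.le hD1).eventually_lt_const ht)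
    apply Set.Finite.subset (Set.finite_Icc (0 : Fin m → ℕ) fun _ => N)
    intro w hw
    have hsw : ∑ k, w k < N := by
      by_contra hcon
      push_neg at hcon
      exact absurd (hN _ hcon) (not_lt.2 ((Set.mem_setOf_eq ▸ hw).trans (hLD w)))
    refine Set.mem_Icc.2 ⟨fun k => Nat.zero_le _, fun k => ?_⟩
    exact le_trans (Finset.single_le_sum (fun i _ => Nat.zero_le (w i)) (Finset.mem_univ k)) hsw.le
  -- Choose `n0`
  have hev : ∀ᶠ n in (atTop : Filter ℕ),
      (∀ k, |δ k ^ n * C k| < ε) ∧ g (fun k => δ k ^ n * C k) = e := by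
    refine (eventually_all.2 fun k => ?_).and hge
    have h1 : Tendsto (fun n : ℕ => |δ k ^ n * C k|) atTop (𝓝 0) := by
      have := (tendsto_pow_atTop_nhds_zero_of_lt_one (hδpos k).le (hδ k).2).mul_const (C k)
      simpa using this.abs
    exact h1.eventually_lt_const hε
  obtain ⟨n0, hn0⟩ := eventually_atTop.mp hev
  -- The geometric sums
  have hsum : ∀ n, n0 ≤ n → HasSum (fun w => b w * L w ^ n) e := by
    intro n hn
    have h := hga _ (hn0 n hn).1
    rw [(hn0 n hn).2] at h
    have heq : (fun w : Fin m → ℕ => a w * ∏ k, (δ k ^ n * C k) ^ w k)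
        = fun w => b w * L w ^ n := by
      funext w
      have hp : ∏ k, (δ k ^ n * C k) ^ w k = (∏ k, δ k ^ w k) ^ n * ∏ k, C k ^ w k := by
        rw [← Finset.prod_pow, ← Finset.prod_mul_distrib]
        refine Finset.prod_congr rfl fun k _ => ?_
        rw [mul_pow, ← pow_mul, ← pow_mul, Nat.mul_comm]
      rw [hp, hbdef, hLdef]; ring
    rwa [heq] at h
  -- Absolute summability bound
  have hSumm : Summable fun w => |b w| * L w ^ n0 := by
    have h2 := summable_abs_iff.mpr (hsum n0 le_rfl).summable
    exact h2.congr fun w => by rw [abs_mul, abs_pow, abs_of_pos (hLpos w)]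
  -- Part 1 : `b 0 = e`
  have hb0 : b 0 = e := by
    have htt : Tendsto (fun n : ℕ => ∑' w, b w * L w ^ (n0 + n)) atTop
        (𝓝 (∑' w : Fin m → ℕ, if w = 0 then b 0 else 0)) := by
      apply tendsto_tsum_of_dominated_convergence
        (bound := fun w => |b w| * L w ^ n0) hSumm
      · intro w
        by_cases hw : w = 0
        · subst hw
          simp only [if_pos rfl, hL0, one_pow, mul_one]
          exact tendsto_const_nhds
        · simp only [if_neg hw]
          have h0 : Tendsto (fun n : ℕ => (b w * L w ^ n0) * L w ^ n) atTop (𝓝 0) := by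
            simpa using
              (tendsto_pow_atTop_nhds_zero_of_lt_one (hLpos w).le (hLlt1 w hw)).const_mul
                (b w * L w ^ n0)
          refine h0.congr fun n => ?_
          rw [pow_add]; ring
      · filter_upwards with n w
        rw [Real.norm_eq_abs, abs_mul, abs_pow, abs_of_pos (hLpos w)]
        exact mul_le_mul_of_nonneg_left
          (pow_le_pow_of_le_one (hLpos w).le (hLle1 w) (Nat.le_add_right _ _)) (abs_nonneg _)
    have hconst : (fun n : ℕ => ∑' w, b w * L w ^ (n0 + n)) = fun _ => e :=
      funext fun n => (hsum _ (Nat.le_add_right _ _)).tsum_eq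
    rw [hconst, tsum_ite_eq] at htt
    exact (tendsto_nhds_unique tendsto_const_nhds htt).symm
  have ha0 : a 0 = e := by
    have hb0' : b 0 = a 0 := by simp [hbdef]
    rwa [hb0'] at hb0
  -- Part 2
  have ha : ∀ w : Fin m → ℕ, w ≠ 0 → a w = 0 := by
    by_contra hcon
    push_neg at hcon
    obtain ⟨w1, hw1ne, hw1⟩ := hcon
    have hbne : ∀ w, a w ≠ 0 → b w ≠ 0 := fun w hw =>
      mul_ne_zero hw (Finset.prod_ne_zero_iff.2 fun k _ => pow_ne_zero _ (hC k))
    set c : (Fin m → ℕ) → ℝ := fun w => if w = 0 then 0 else b w with hcdef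
    have hcw1 : c w1 ≠ 0 := by
      simp only [hcdef, if_neg hw1ne]
      exact hbne w1 hw1
    have hfin1 : {w : Fin m → ℕ | c w ≠ 0 ∧ L w1 ≤ L w}.Finite :=
      (hfin (L w1) (hLpos w1)).subset fun w hw => hw.2
    have hne1 : hfin1.toFinset.Nonempty := by
      rw [Set.Finite.toFinset_nonempty]
      exact ⟨w1, hcw1, le_rfl⟩
    obtain ⟨wm, hwmmem, hwmmax⟩ := hfin1.toFinset.exists_max_image L hne1
    rw [Set.Finite.mem_toFinset] at hwmmem
    have hwmc : c wm ≠ 0 := hwmmem.1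
    have hmax : ∀ w, c w ≠ 0 → L w ≤ L wm := by
      intro w hw
      by_cases h : L w1 ≤ L w
      · exact hwmmax w (hfin1.mem_toFinset.2 ⟨hw, h⟩)
      · exact (not_le.1 h).le.trans hwmmem.2
    set μ := L wm with hμdef
    have hμpos : 0 < μ := hLpos wm
    have hlt : ∀ w, w ≠ wm → c w ≠ 0 → L w < μ := fun w hne hc =>
      lt_of_le_of_ne (hmax w hc) fun h => hne (hLinj h)
    have hzero : ∀ n, n0 ≤ n → HasSum (fun w => c w * (L w / μ) ^ n) 0 := by
      intro n hn
      have h1 : HasSum (fun w => b w * L w ^ n - if w = 0 then e else 0) (e - e) :=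
        (hsum n hn).sub (hasSum_ite_eq 0 e)
      rw [sub_self] at h1
      have hfeq : (fun w : Fin m → ℕ => c w * L w ^ n)
          = fun w => b w * L w ^ n - if w = 0 then e else 0 := by
        funext w
        by_cases hw : w = 0
        · subst hw; simp [hcdef, hL0, hb0]
        · simp [hcdef, hw]
      have h2 : HasSum (fun w => c w * L w ^ n) 0 := by rw [hfeq]; exact h1
      have h3 := h2.mul_left ((μ ^ n)⁻¹)
      rw [mul_zero] at h3
      have hfeq2 : (fun w : Fin m → ℕ => (μ ^ n)⁻¹ * (c w * L w ^ n))
          = fun w => c w * (L w / μ) ^ n := by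
        funext w; rw [div_pow, div_eq_mul_inv]; ring
      rwa [hfeq2] at h3
    have htt2 : Tendsto (fun n : ℕ => ∑' w, c w * (L w / μ) ^ (n0 + n)) atTop
        (𝓝 (∑' w : Fin m → ℕ, if w = wm then c wm else 0)) := by
      apply tendsto_tsum_of_dominated_convergence
        (bound := fun w => |c w| * (L w / μ) ^ n0)
      · have hS2 : Summable fun w => (μ ^ n0)⁻¹ * (|b w| * L w ^ n0) := hSumm.mul_left _
        refine Summable.of_nonneg_of_le
          (fun w => mul_nonneg (abs_nonneg _)
            (pow_nonneg (div_nonneg (hLpos w).le hμpos.le) _)) (fun w => ?_) hS2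
        have hcb : |c w| ≤ |b w| := by
          by_cases hw : w = 0 <;> simp [hcdef, hw, abs_nonneg]
        rw [div_pow, div_eq_mul_inv]
        calc |c w| * (L w ^ n0 * (μ ^ n0)⁻¹)
            ≤ |b w| * (L w ^ n0 * (μ ^ n0)⁻¹) :=
              mul_le_mul_of_nonneg_right hcb
                (mul_nonneg (pow_nonneg (hLpos w).le _) (inv_nonneg.2 (pow_nonneg hμpos.le _)))
          _ = (μ ^ n0)⁻¹ * (|b w| * L w ^ n0) := by ring
      · intro w
        by_cases hw : w = wm
        · subst hw
          simp only [if_pos rfl]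
          have hfe : (fun n : ℕ => c w * (L w / μ) ^ (n0 + n)) = fun _ => c w := by
            funext n
            rw [← hμdef, div_self hμpos.ne', one_pow, mul_one]
          rw [hfe]; exact tendsto_const_nhds
        · simp only [if_neg hw]
          by_cases hc : c w = 0
          · simp only [hc, zero_mul]; exact tendsto_const_nhds
          · have hlt' : L w / μ < 1 := (div_lt_one hμpos).2 (hlt w hw hc)
            have h0le : 0 ≤ L w / μ := div_nonneg (hLpos w).le hμpos.le
            have h0 : Tendsto (fun n : ℕ => (c w * (L w / μ) ^ n0) * (L w / μ) ^ n)
                atTop (𝓝 0) := by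
              simpa using
                (tendsto_pow_atTop_nhds_zero_of_lt_one h0le hlt').const_mul
                  (c w * (L w / μ) ^ n0)
            refine h0.congr fun n => ?_
            rw [pow_add]; ring
      · filter_upwards with n w
        rw [Real.norm_eq_abs, abs_mul, abs_pow,
          abs_of_nonneg (div_nonneg (hLpos w).le hμpos.le)]
        by_cases hc : c w = 0
        · simp [hc]
        · have hle1 : L w / μ ≤ 1 := by
            rcases eq_or_ne w wm with rfl | hne
            · rw [← hμdef, div_self hμpos.ne']
            · exact ((div_lt_one hμpos).2 (hlt w hne hc)).le
          exact mul_le_mul_of_nonneg_left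
            (pow_le_pow_of_le_one (div_nonneg (hLpos w).le hμpos.le) hle1
              (Nat.le_add_right _ _)) (abs_nonneg _)
    have hconst2 : (fun n : ℕ => ∑' w, c w * (L w / μ) ^ (n0 + n)) = fun _ => (0 : ℝ) :=
      funext fun n => (hzero _ (Nat.le_add_right _ _)).tsum_eq
    rw [hconst2, tsum_ite_eq] at htt2
    exact hwmc (tendsto_nhds_unique htt2 tendsto_const_nhds)
  refine ⟨ha0, ha, ?_⟩
  -- Part 3
  have hev3 : ∀ᶠ y in 𝓝 (0 : Fin m → ℝ), ∀ k, |y k| < ε := by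
    rw [eventually_all]
    intro k
    have hcont : Continuous fun y : Fin m → ℝ => |y k| := (continuous_apply k).abs
    have h0 : Tendsto (fun y : Fin m → ℝ => |y k|) (𝓝 0) (𝓝 |(0 : Fin m → ℝ) k|) :=
      hcont.tendsto 0
    simp only [Pi.zero_apply, abs_zero] at h0
    exact h0.eventually_lt_const hε
  filter_upwards [hev3] with y hy
  have h := hga y hy
  have heq : (fun w : Fin m → ℕ => a w * ∏ k, y k ^ w k)
      = fun w => if w = 0 then e else 0 := by
    funext w
    by_cases hw : w = 0
    · subst hw; simp [ha0]
    · simp [ha w hw, hw]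
  rw [heq] at h
  exact h.unique (hasSum_ite_eq 0 e)
end
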